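/- Memory bound on the Wolff trellis state spaces: let S₁,…,S_{n−k} be a basis of a subspace S ≤ V = (𝔽₂²)ⁿ and 0 ≤ i ≤ n. Then log₂|fᵢ(S^⊥)| ≤ |{j : πᵢ(Sⱼ) ≠ 0 and πᵢ(Sⱼ) ≠ Sⱼ}|, the number of generators whose support straddles position i (i.e., which have a nontrivial component both among the first i positions and among the last n−i positions). In particular, for a convolutional stabilizer set of memory m, every Wolff state space has size at most 2^m. -/

import Mathlib

/-! The `j`-th coordinate of `fᵢ(P)` is `ω(πᵢ Sⱼ, P)`. For `P ∈ S^⊥` it vanishes whenever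
`πᵢ Sⱼ` is `0` or `Sⱼ` itself, so `fᵢ(S^⊥)` lies in the coordinate subspace indexed by the
generators straddling position `i`, which has `2^|{straddling j}|` elements. -/

/-- `V = (𝔽₂²)ⁿ`, the additive group underlying the effective Pauli group `Gₙ`. -/
abbrev PV (n : ℕ) := Fin n → ZMod 2 × ZMod 2

/-- The symplectic form `ω(v,w) = Σᵢ (aᵢb′ᵢ + a′ᵢbᵢ)` over `𝔽₂`. -/
def sympOmega {n : ℕ} (v w : PV n) : ZMod 2 :=
  ∑ i, ((v i).1 * (w i).2 + (w i).1 * (v i).2)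

lemma sympOmega_add_left {n : ℕ} (a b w : PV n) :
    sympOmega (a + b) w = sympOmega a w + sympOmega b w := by
  unfold sympOmega
  rw [← Finset.sum_add_distrib]
  refine Finset.sum_congr rfl fun i _ => ?_
  simp [Prod.fst_add, Prod.snd_add, add_mul, mul_add]
  ring

lemma sympOmega_smul_left {n : ℕ} (c : ZMod 2) (a w : PV n) :
    sympOmega (c • a) w = c * sympOmega a w := by
  unfold sympOmega
  rw [Finset.mul_sum]
  refine Finset.sum_congr rfl fun i _ => ?_
  simp [Prod.smul_fst, Prod.smul_snd, smul_eq_mul]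
  ring

/-- The symplectic orthogonal `S^⊥ = {P ∈ V : ω(P,Q) = 0 for all Q ∈ S}`. -/
def sPerp {n : ℕ} (S : Submodule (ZMod 2) (PV n)) : Submodule (ZMod 2) (PV n) where
  carrier := {P | ∀ Q ∈ S, sympOmega P Q = 0}
  add_mem' := by
    intro a b ha hb Q hQ
    rw [sympOmega_add_left, ha Q hQ, hb Q hQ, add_zero]
  zero_mem' := by
    intro Q hQ
    simp [sympOmega]
  smul_mem' := by
    intro c a ha Q hQ
    rw [sympOmega_smul_left, ha Q hQ, mul_zero]

/-- The truncation map `πᵢ : V → V`, `(P₁,…,Pₙ) ↦ (P₁,…,Pᵢ,0,…,0)`. -/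
def trunc (n i : ℕ) : PV n →ₗ[ZMod 2] PV n where
  toFun v := fun j => if (j : ℕ) < i then v j else 0
  map_add' := by
    intro a b
    funext j
    by_cases h : (j : ℕ) < i <;> simp [h]
  map_smul' := by
    intro c a
    funext j
    by_cases h : (j : ℕ) < i <;> simp [h]

lemma sympOmega_comm {n : ℕ} (v w : PV n) : sympOmega v w = sympOmega w v :=
  Finset.sum_congr rfl fun _ _ => by ring

lemma sympOmega_trunc_right {n i : ℕ} (v w : PV n) :
    sympOmega v (trunc n i w) = sympOmega (trunc n i v) w :=
  Finset.sum_congr rfl fun j _ => by by_cases h : (j : ℕ) < i <;> simp [trunc, h]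

lemma sympOmega_zero_left {n : ℕ} (w : PV n) : sympOmega 0 w = 0 := by
  simp [sympOmega]

lemma sympOmega_trunc_eq_zero_of_not_straddling {n i : ℕ} {S : Submodule (ZMod 2) (PV n)}
    {Q P : PV n} (hQ : Q ∈ S) (hP : P ∈ sPerp S) (h : trunc n i Q = 0 ∨ trunc n i Q = Q) :
    sympOmega Q (trunc n i P) = 0 := by
  rw [sympOmega_trunc_right]
  rcases h with h | h
  · rw [h, sympOmega_zero_left]
  · rw [h, sympOmega_comm]
    exact hP Q hQ

lemma Nat.card_le_pow_of_forall_eq_zero {ι R : Type*} [Zero R] [Fintype R]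
    (T : Set (ι → R)) (J : Finset ι) (hT : ∀ y ∈ T, ∀ j ∉ J, y j = 0) :
    Nat.card T ≤ Fintype.card R ^ J.card := by
  have hinj : Function.Injective fun (y : T) (j : J) => (y : ι → R) j := by
    rintro ⟨a, ha⟩ ⟨b, hb⟩ h
    ext j
    by_cases hj : j ∈ J
    · exact congrFun h ⟨j, hj⟩
    · exact (hT a ha j hj).trans (hT b hb j hj).symm
  calc Nat.card T ≤ Nat.card (J → R) := Nat.card_le_card_of_injective _ hinj
    _ = Fintype.card R ^ J.card := by
      rw [Nat.card_fun, Nat.card_eq_fintype_card, Nat.card_eq_finsetCard]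

lemma card_wolffStateSpace_le {n i : ℕ} {ι : Type*} [Fintype ι]
    {S : Submodule (ZMod 2) (PV n)} (Sgen : ι → PV n) (hmem : ∀ j, Sgen j ∈ S) :
    Nat.card ((fun (P : PV n) (j : ι) => sympOmega (Sgen j) (trunc n i P)) ''
        (sPerp S : Set (PV n)))
      ≤ 2 ^ (Finset.univ.filter
          (fun j => trunc n i (Sgen j) ≠ 0 ∧ trunc n i (Sgen j) ≠ Sgen j)).card := by
  refine (Nat.card_le_pow_of_forall_eq_zero _ _ ?_).trans_eq (by rw [ZMod.card])
  rintro _ ⟨P, hP, rfl⟩ j hj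
  simp only [Finset.mem_filter, Finset.mem_univ, true_and, not_and_or, not_not] at hj
  exact sympOmega_trunc_eq_zero_of_not_straddling (hmem j) hP hj

theorem wolff_state_space_memory_bound_general (n k : ℕ)
    (S : Submodule (ZMod 2) (PV n))
    (Sgen : Fin (n - k) → PV n)
    (hspan : Submodule.span (ZMod 2) (Set.range Sgen) = S) :
    (∀ i ≤ n,
      Nat.card ((fun (P : PV n) (j : Fin (n - k)) =>
            sympOmega (Sgen j) (trunc n i P)) '' (sPerp S : Set (PV n)))
        ≤ 2 ^ (Finset.univ.filter
            (fun j : Fin (n - k) =>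
              trunc n i (Sgen j) ≠ 0 ∧ trunc n i (Sgen j) ≠ Sgen j)).card) ∧
    ∀ m : ℕ,
      (∀ i ≤ n,
        (Finset.univ.filter
            (fun j : Fin (n - k) =>
              trunc n i (Sgen j) ≠ 0 ∧ trunc n i (Sgen j) ≠ Sgen j)).card ≤ m) →
      ∀ i ≤ n,
        Nat.card ((fun (P : PV n) (j : Fin (n - k)) =>
              sympOmega (Sgen j) (trunc n i P)) '' (sPerp S : Set (PV n)))
          ≤ 2 ^ m := by
  have hmem : ∀ j, Sgen j ∈ S := fun j => hspan ▸ Submodule.subset_span ⟨j, rfl⟩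
  refine ⟨fun i _ => card_wolffStateSpace_le Sgen hmem, fun m hm i hi => ?_⟩
  exact (card_wolffStateSpace_le Sgen hmem).trans (Nat.pow_le_pow_right two_pos (hm i hi))

/-- Memory bound on the Wolff trellis state spaces: log₂|fᵢ(S^⊥)| is at most the number
of generators straddling position i; in particular for a stabilizer set of memory m
every Wolff state space has size at most 2^m. -/
theorem wolff_state_space_memory_bound (n k : ℕ) (hk : k ≤ n)
    (S : Submodule (ZMod 2) (PV n))
    (Sgen : Fin (n - k) → PV n) (hind : LinearIndependent (ZMod 2) Sgen)
    (hspan : Submodule.span (ZMod 2) (Set.range Sgen) = S) :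
    (∀ i ≤ n,
      Nat.card ((fun (P : PV n) (j : Fin (n - k)) =>
            sympOmega (Sgen j) (trunc n i P)) '' (sPerp S : Set (PV n)))
        ≤ 2 ^ (Finset.univ.filter
            (fun j : Fin (n - k) =>
              trunc n i (Sgen j) ≠ 0 ∧ trunc n i (Sgen j) ≠ Sgen j)).card) ∧
    ∀ m : ℕ,
      (∀ i ≤ n,
        (Finset.univ.filter
            (fun j : Fin (n - k) =>
              trunc n i (Sgen j) ≠ 0 ∧ trunc n i (Sgen j) ≠ Sgen j)).card ≤ m) →
      ∀ i ≤ n,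
        Nat.card ((fun (P : PV n) (j : Fin (n - k)) =>
              sympOmega (Sgen j) (trunc n i P)) '' (sPerp S : Set (PV n)))
          ≤ 2 ^ m :=
  wolff_state_space_memory_bound_general n k S Sgen hspan
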